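/- Let α, β ∈ ℂ and n ≥ 1. Every element of K_{n+1}(α,β) is a finite ℂ-linear combination of elements of the form ι(a)·b_nᵉ·ι(b), where a, b ∈ K_n(α,β), ε ∈ {0, 1, 2}, ι : K_n(α,β) → K_{n+1}(α,β) is the natural algebra map, and b_n denotes its class in K_{n+1}(α,β). Equivalently, the map K_n(α,β) ⊕ (K_n(α,β) ⊗_{K_{n−1}(α,β)} K_n(α,β)) ⊕ (K_n(α,β) ⊗_{K_{n−1}(α,β)} K_n(α,β)) → K_{n+1}(α,β) sending x ⊕ (y⊗z) ⊕ (u⊗v) to x + y·b_n·z + u·b_n²·v is surjective. -/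

import Mathlib

def braidRels (m : ℕ) : Set (FreeGroup (Fin m)) :=
  { r | (∃ i j : Fin m, (i : ℕ) + 1 < (j : ℕ) ∧
          r = FreeGroup.of i * FreeGroup.of j * (FreeGroup.of i)⁻¹ * (FreeGroup.of j)⁻¹) ∨
        (∃ i j : Fin m, (j : ℕ) = (i : ℕ) + 1 ∧
          r = FreeGroup.of i * FreeGroup.of j * FreeGroup.of i *
              (FreeGroup.of j * FreeGroup.of i * FreeGroup.of j)⁻¹) }

abbrev BraidGroup (n : ℕ) := PresentedGroup (braidRels (n - 1))

def braidGen (n : ℕ) (i : Fin (n - 1)) : BraidGroup n := PresentedGroup.of i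

theorem braid_mk_eq_one {m : ℕ} {r : FreeGroup (Fin m)} (hr : r ∈ braidRels m) :
    PresentedGroup.mk (braidRels m) r = 1 :=
  (QuotientGroup.eq_one_iff r).mpr (Subgroup.subset_normalClosure hr)

noncomputable def braidIncl (n : ℕ) : BraidGroup n →* BraidGroup (n + 1) :=
  PresentedGroup.toGroup
    (f := fun i => braidGen (n + 1) (Fin.castLE (by omega : n - 1 ≤ n + 1 - 1) i))
    (by
      rintro r (⟨i, j, hij, rfl⟩ | ⟨i, j, hij, rfl⟩)
      · have h1 := braid_mk_eq_one (m := n + 1 - 1)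
          (Or.inl ⟨Fin.castLE (by omega) i, Fin.castLE (by omega) j, by simpa using hij, rfl⟩)
        simp only [map_mul, map_inv, FreeGroup.lift_apply_of] at h1 ⊢
        exact h1
      · have h1 := braid_mk_eq_one (m := n + 1 - 1)
          (Or.inr ⟨Fin.castLE (by omega) i, Fin.castLE (by omega) j, by simpa using hij, rfl⟩)
        simp only [map_mul, map_inv, FreeGroup.lift_apply_of] at h1 ⊢
        exact h1)

theorem braidIncl_gen (n : ℕ) (i : Fin (n - 1)) :
    braidIncl n (braidGen n i) = braidGen (n + 1) (Fin.castLE (by omega) i) :=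
  PresentedGroup.toGroup.of _

variable (R : Type) [CommRing R]

noncomputable def gb (n : ℕ) (i : Fin (n - 1)) : MonoidAlgebra R (BraidGroup n) :=
  MonoidAlgebra.of R (BraidGroup n) (braidGen n i)

inductive cubicRel (α β : R) (n : ℕ) :
    MonoidAlgebra R (BraidGroup n) → MonoidAlgebra R (BraidGroup n) → Prop
  | cube (i : Fin (n - 1)) :
      cubicRel α β n (gb R n i ^ 3) (α • gb R n i ^ 2 + β • gb R n i + 1)

abbrev CubicHecke (α β : R) (n : ℕ) := RingQuot (cubicRel R α β n)

noncomputable def hb (α β : R) (n : ℕ) (i : Fin (n - 1)) : CubicHecke R α β n :=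
  RingQuot.mkAlgHom R (cubicRel R α β n) (gb R n i)

theorem mapDomain_gb (n : ℕ) (i : Fin (n - 1)) :
    (MonoidAlgebra.mapDomainAlgHom R R (braidIncl n)) (gb R n i)
      = gb R (n + 1) (Fin.castLE (by omega) i) := by
  simp only [gb, MonoidAlgebra.mapDomainAlgHom_apply, MonoidAlgebra.of_apply,
    Finsupp.mapDomain_single, MonoidAlgebra.mapDomain_single, braidIncl_gen]

noncomputable def heckeIncl (α β : R) (n : ℕ) :
    CubicHecke R α β n →ₐ[R] CubicHecke R α β (n + 1) :=
  RingQuot.liftAlgHom R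
    ⟨(RingQuot.mkAlgHom R (cubicRel R α β (n + 1))).comp
        (MonoidAlgebra.mapDomainAlgHom R R (braidIncl n)),
      by
        rintro x y ⟨i⟩
        have h2 : (MonoidAlgebra.mapDomainAlgHom R R (braidIncl n)) (gb R n i ^ 3)
            = gb R (n + 1) (Fin.castLE (by omega) i) ^ 3 := by
          rw [map_pow, mapDomain_gb]
        have h3 : (MonoidAlgebra.mapDomainAlgHom R R (braidIncl n))
              (α • gb R n i ^ 2 + β • gb R n i + 1)
            = α • gb R (n + 1) (Fin.castLE (by omega) i) ^ 2
              + β • gb R (n + 1) (Fin.castLE (by omega) i) + 1 := by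
          rw [map_add, map_add, map_smul, map_smul, map_pow, map_one, mapDomain_gb]
        simp only [AlgHom.comp_apply, h2, h3]
        exact RingQuot.mkAlgHom_rel R (cubicRel.cube _)⟩

theorem heckeIncl_gen (α β : R) (n : ℕ) (i : Fin (n - 1)) :
    heckeIncl R α β n (hb R α β n i) = hb R α β (n + 1) (Fin.castLE (by omega) i) := by
  simp only [heckeIncl, hb, RingQuot.liftAlgHom_mkAlgHom_apply, AlgHom.comp_apply, mapDomain_gb]

noncomputable def R0elt {A : Type*} [Ring A] [Algebra R A] (α β : R) (x y : A) : A :=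
  y * x ^ 2 * y
  + (β ^ 2 - α) • (x ^ 2 * y ^ 2 * x ^ 2)
  + (α ^ 2 - α * β ^ 2 - β) • (x * y ^ 2 * x ^ 2 + x ^ 2 * y ^ 2 * x)
  + (α ^ 2 - α * β ^ 2) • (x ^ 2 * y * x ^ 2)
  + (1 + 2 * α * β + α ^ 2 * β ^ 2 - α ^ 3) • (x * y ^ 2 * x)
  + (1 + α * β + α ^ 2 * β ^ 2 - α ^ 3) • (x * y * x ^ 2 + x ^ 2 * y * x)
  + (1 + 2 * α * β - β ^ 3) • (y ^ 2 * x ^ 2 + x ^ 2 * y ^ 2)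
  + (α * β ^ 3 - 2 * α - 2 * α ^ 2 * β) • (y * x ^ 2 + x ^ 2 * y)
  + (α * β ^ 3 - 2 * α - 2 * α ^ 2 * β + β ^ 2) • (y ^ 2 * x + x * y ^ 2)
  + (α ^ 4 - α ^ 3 * β ^ 2 - 2 * α ^ 2 * β - 3 * α) • (x * y * x)
  + (2 * α ^ 3 * β + 3 * α ^ 2 - α ^ 2 * β ^ 3 - α * β ^ 2) • (y * x + x * y)
  + (β ^ 4 - 2 * β - 3 * α * β ^ 2 + α ^ 2) • (x ^ 2 + y ^ 2)
  + (1 + 4 * α * β + 3 * α ^ 2 * β ^ 2 - α ^ 3 - α * β ^ 4 - β ^ 3) • x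
  + (1 + 3 * α * β + 3 * α ^ 2 * β ^ 2 - α ^ 3 - α * β ^ 4) • y
  + algebraMap R A (3 * β ^ 2 - β ^ 5 - 2 * α - 3 * α ^ 2 * β + 4 * α * β ^ 3)

theorem map_R0elt {A B : Type*} [Ring A] [Ring B] [Algebra R A] [Algebra R B]
    (f : A →ₐ[R] B) (α β : R) (x y : A) :
    f (R0elt R α β x y) = R0elt R α β (f x) (f y) := by
  simp only [R0elt, map_add, map_mul, map_pow, map_smul, AlgHom.commutes]

inductive KRel (α β : R) (n : ℕ) : CubicHecke R α β n → CubicHecke R α β n → Prop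
  | r0 (j : Fin (n - 1)) (h : (j : ℕ) + 1 < n - 1) :
      KRel α β n (R0elt R α β (hb R α β n j) (hb R α β n ⟨(j : ℕ) + 1, h⟩)) 0

abbrev KAlg (α β : R) (n : ℕ) := RingQuot (KRel R α β n)

noncomputable def towerIncl (α β : R) (n : ℕ) :
    KAlg R α β n →ₐ[R] KAlg R α β (n + 1) :=
  RingQuot.liftAlgHom R
    ⟨(RingQuot.mkAlgHom R (KRel R α β (n + 1))).comp (heckeIncl R α β n),
      by
        rintro x y ⟨j, h⟩
        have hle : n - 1 ≤ n + 1 - 1 := by omega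
        have hlt : ((Fin.castLE hle j : Fin (n + 1 - 1)) : ℕ) + 1 < n + 1 - 1 := by
          simp only [Fin.coe_castLE]; omega
        have e3 : Fin.castLE hle ⟨(j : ℕ) + 1, h⟩
            = (⟨((Fin.castLE hle j : Fin (n + 1 - 1)) : ℕ) + 1, hlt⟩ : Fin (n + 1 - 1)) := by
          ext; simp
        rw [AlgHom.comp_apply, AlgHom.comp_apply, map_R0elt R (heckeIncl R α β n),
          heckeIncl_gen, heckeIncl_gen, e3, map_zero (heckeIncl R α β n)]
        exact RingQuot.mkAlgHom_rel R (KRel.r0 (Fin.castLE hle j) hlt)⟩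

/-- The class of the inverse `b_{i+1}⁻¹` in the cubic Hecke algebra. -/
noncomputable def hbInv (α β : R) (n : ℕ) (i : Fin (n - 1)) : CubicHecke R α β n :=
  RingQuot.mkAlgHom R (cubicRel R α β n)
    (MonoidAlgebra.of R (BraidGroup n) (braidGen n i)⁻¹)

/-- The class of the generator `b_{i+1}` in `K_n(α,β)`. -/
noncomputable def kb (α β : R) (n : ℕ) (i : Fin (n - 1)) : KAlg R α β n :=
  RingQuot.mkAlgHom R (KRel R α β n) (hb R α β n i)

/-- The class of `b_{i+1}⁻¹` in `K_n(α,β)`. -/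
noncomputable def kbInv (α β : R) (n : ℕ) (i : Fin (n - 1)) : KAlg R α β n :=
  RingQuot.mkAlgHom R (KRel R α β n) (hbInv R α β n i)

/-- The iterated tower map `K_n(α,β) → K_{n+k}(α,β)`. -/
noncomputable def towerInclMany (α β : R) (n : ℕ) :
    (k : ℕ) → (KAlg R α β n →ₐ[R] KAlg R α β (n + k))
  | 0 => AlgHom.id R _
  | k + 1 => (towerIncl R α β (n + k)).comp (towerInclMany α β n k)

/-- The class of the generator `b_n` in `K_{n+1}(α,β)` (for `n ≥ 1`). -/
noncomputable def lastGen (α β : R) (n : ℕ) (h : 1 ≤ n) : KAlg R α β (n + 1) :=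
  kb R α β (n + 1) ⟨n - 1, by omega⟩

/-- The class of `b_n⁻¹` in `K_{n+1}(α,β)` (for `n ≥ 1`). -/
noncomputable def lastGenInv (α β : R) (n : ℕ) (h : 1 ≤ n) : KAlg R α β (n + 1) :=
  kbInv R α β (n + 1) ⟨n - 1, by omega⟩

/-- An admissible functional with parameters `(z, z̄)` on the tower of the algebras
`K_n(α,β)`: a compatible family of `R`-linear functionals satisfying the Markov-type
conditions for the last generator and its inverse. -/
structure AdmissibleFunctional (α β z zbar : R) : Type _ where
  T : ∀ n : ℕ, KAlg R α β n →ₗ[R] R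
  compat : ∀ (n : ℕ) (x : KAlg R α β n), T (n + 1) (towerIncl R α β n x) = T n x
  cond_z : ∀ (n : ℕ) (h : 1 ≤ n) (x y : KAlg R α β n),
      T (n + 1) (towerIncl R α β n x * lastGen R α β n h * towerIncl R α β n y)
        = z * T n (x * y)
  cond_zbar : ∀ (n : ℕ) (h : 1 ≤ n) (x y : KAlg R α β n),
      T (n + 1) (towerIncl R α β n x * lastGenInv R α β n h * towerIncl R α β n y)
        = zbar * T n (x * y)

/-- A Markov trace is an admissible functional each of whose components is a trace. -/
def AdmissibleFunctional.IsMarkov {α β z zbar : R}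
    (T : AdmissibleFunctional R α β z zbar) : Prop :=
  ∀ (n : ℕ) (a b : KAlg R α β n), T.T n (a * b) = T.T n (b * a)

/-- A normalized functional takes the value `1` on the unit of `K₁(α,β)`. -/
def AdmissibleFunctional.IsNormalized {α β z zbar : R}
    (T : AdmissibleFunctional R α β z zbar) : Prop :=
  T.T 1 1 = 1

/-!
Induction on `n`. Write `ι` for `towerIncl`, `y = b_n`, and `M = sandwichSpan (range ι) y` for
the span of the products `ι a * y ^ e * ι b` with `e ≤ 2`. As `K_{n+1}` is generated by `ι K_n`
and `y`, and `M` contains `1` and is stable under left multiplication by `ι K_n`, it suffices that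
`y * ι a * y ^ e ∈ M`. For `n = 1`, `ι a` is a scalar and the cubic relation suffices. For `n > 1`,
the induction hypothesis writes `a` as a combination of `ι c * X ^ f * ι d` with `X = b_{n-1}` and
`c, d ∈ K_{n-1}`; since `ι (ι c)` commutes with `y`, everything reduces to `y X^f y^e ∈ M` for
`f, e ≤ 2`, a statement about the two generators `X, y` alone. The braid relation gives
`y X y = X y X` and `y X y² = X² y X`; the relation `R₀` is `y X² y` plus a combination of words
`X^i y^e X^k` with `e ≤ 2`; and `y X² y²` reduces to `y X² y` through `y X² y⁻¹ = X⁻¹ y² X`,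
where the cubic relation gives `X⁻¹ = X² - α X - β` and `y⁻¹ = y² - α y - β`.
-/

section Cubic

variable {R} {A : Type*} [Ring A] [Algebra R A] {α β : R} {x : A}

theorem mul_cubic_inv (h : x ^ 3 = α • x ^ 2 + β • x + 1) : x * (x ^ 2 - α • x - β • 1) = 1 := by
  rw [mul_sub, mul_sub, mul_smul_comm, mul_smul_comm, mul_one, ← pow_two, ← pow_succ', h]
  abel

theorem cubic_inv_mul (h : x ^ 3 = α • x ^ 2 + β • x + 1) : (x ^ 2 - α • x - β • 1) * x = 1 := by
  rw [sub_mul, sub_mul, smul_mul_assoc, smul_mul_assoc, one_mul, ← pow_two, ← pow_succ, h]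
  abel

theorem pow_add_three_of_cubic (h : x ^ 3 = α • x ^ 2 + β • x + 1) (e : ℕ) :
    x ^ (e + 3) = α • x ^ (e + 2) + β • x ^ (e + 1) + x ^ e := by
  rw [pow_add, h]
  simp only [mul_add, mul_smul_comm, ← pow_add, mul_one, ← pow_succ]

end Cubic

section Braid

variable {M : Type*} [Monoid M] {x y x' y' : M}

theorem braid_mul_sq (h : y * x * y = x * y * x) : y * x * y ^ 2 = x ^ 2 * y * x := by
  calc y * x * y ^ 2 = y * x * y * y := by simp only [sq, mul_assoc]
    _ = x * y * x * y := by rw [h]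
    _ = x * (y * x * y) := by simp only [mul_assoc]
    _ = x ^ 2 * y * x := by rw [h]; simp only [sq, mul_assoc]

theorem braid_conj (h : y * x * y = x * y * x) (hx : x' * x = 1) (hy : y * y' = 1) :
    y * x * y' = x' * y * x := by
  calc y * x * y' = x' * (x * y * x) * y' := by simp only [← mul_assoc, hx, one_mul]
    _ = x' * y * x := by rw [← h]; simp only [mul_assoc, hy, mul_one]

theorem braid_conj_sq (h : y * x * y = x * y * x) (hx : x' * x = 1) (hx' : x * x' = 1)
    (hy : y * y' = 1) (hy' : y' * y = 1) : y * x ^ 2 * y' = x' * y ^ 2 * x := by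
  calc y * x ^ 2 * y' = (y * x * y') * (y * x * y') := by
        simp only [sq, mul_assoc, ← mul_assoc y' y, hy', one_mul]
    _ = x' * y ^ 2 * x := by
        rw [braid_conj h hx hy]; simp only [sq, mul_assoc, ← mul_assoc x x', hx', one_mul]

end Braid

section Sandwich

variable {R} {A : Type*} [Ring A] [Algebra R A]

def sandwichSpan (B : Subalgebra R A) (y : A) : Submodule R A :=
  Submodule.span R {w | ∃ a ∈ B, ∃ b ∈ B, ∃ e ≤ 2, w = a * y ^ e * b}

variable {B C : Subalgebra R A} {y a b w : A}

theorem mul_pow_mul_mem_sandwichSpan (ha : a ∈ B) (hb : b ∈ B) {e : ℕ} (he : e ≤ 2) :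
    a * y ^ e * b ∈ sandwichSpan B y :=
  Submodule.subset_span ⟨a, ha, b, hb, e, he, rfl⟩

theorem mem_sandwichSpan_of_mem (hb : b ∈ B) : b ∈ sandwichSpan B y := by
  simpa using mul_pow_mul_mem_sandwichSpan (y := y) B.one_mem hb (Nat.zero_le 2)

theorem pow_mem_sandwichSpan_of_le {e : ℕ} (he : e ≤ 2) : y ^ e ∈ sandwichSpan B y := by
  simpa using mul_pow_mul_mem_sandwichSpan (y := y) B.one_mem B.one_mem he

theorem apply_mem_of_mem_sandwichSpan {A' : Type*} [Ring A'] [Algebra R A'] {S : Submodule R A'}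
    (φ : A →ₗ[R] A') (h : ∀ a ∈ B, ∀ b ∈ B, ∀ e ≤ 2, φ (a * y ^ e * b) ∈ S)
    (hw : w ∈ sandwichSpan B y) : φ w ∈ S :=
  (Submodule.span_le (p := S.comap φ)).mpr
    (by rintro _ ⟨a, ha, b, hb, e, he, rfl⟩; exact h a ha b hb e he) hw

theorem mul_mem_sandwichSpan_left (ha : a ∈ B) (hw : w ∈ sandwichSpan B y) :
    a * w ∈ sandwichSpan B y :=
  apply_mem_of_mem_sandwichSpan (LinearMap.mulLeft R a) (fun c hc d hd e he => by
    simpa only [LinearMap.mulLeft_apply, mul_assoc] using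
      mul_pow_mul_mem_sandwichSpan (B.mul_mem ha hc) hd he) hw

theorem mul_mem_sandwichSpan_right (hw : w ∈ sandwichSpan B y) (hb : b ∈ B) :
    w * b ∈ sandwichSpan B y :=
  apply_mem_of_mem_sandwichSpan (LinearMap.mulRight R b) (fun c hc d hd e he => by
    simpa only [LinearMap.mulRight_apply, mul_assoc] using
      mul_pow_mul_mem_sandwichSpan hc (B.mul_mem hd hb) he) hw

theorem sandwichSpan_mono (h : C ≤ B) : sandwichSpan C y ≤ sandwichSpan B y :=
  Submodule.span_mono fun _ ⟨a, ha, b, hb, e, he, hw⟩ => ⟨a, h ha, b, h hb, e, he, hw⟩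

theorem map_mem_sandwichSpan {A' : Type*} [Ring A'] [Algebra R A'] (f : A →ₐ[R] A')
    (hw : w ∈ sandwichSpan B y) : f w ∈ sandwichSpan (B.map f) (f y) :=
  apply_mem_of_mem_sandwichSpan f.toLinearMap (fun a ha b hb e he => by
    simpa only [AlgHom.toLinearMap_apply, map_mul, map_pow] using
      mul_pow_mul_mem_sandwichSpan (Subalgebra.mem_map.mpr ⟨a, ha, rfl⟩)
        (Subalgebra.mem_map.mpr ⟨b, hb, rfl⟩) he) hw

theorem pow_mem_sandwichSpan {α β : R} (hy : y ^ 3 = α • y ^ 2 + β • y + 1) (e : ℕ) :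
    y ^ e ∈ sandwichSpan B y := by
  induction e using Nat.strong_induction_on with
  | _ e ih =>
    obtain he | ⟨e, rfl⟩ : e ≤ 2 ∨ ∃ k, e = k + 3 := by
      rcases le_or_gt e 2 with he | he
      · exact .inl he
      · exact .inr ⟨e - 3, by omega⟩
    · exact pow_mem_sandwichSpan_of_le he
    · rw [pow_add_three_of_cubic hy]
      exact add_mem (add_mem (Submodule.smul_mem _ _ (ih _ (by omega)))
        (Submodule.smul_mem _ _ (ih _ (by omega)))) (ih _ (by omega))

theorem mul_mem_sandwichSpan_of_forall (hy : ∀ a ∈ B, ∀ e ≤ 2, y * a * y ^ e ∈ sandwichSpan B y)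
    (hw : w ∈ sandwichSpan B y) : y * w ∈ sandwichSpan B y :=
  apply_mem_of_mem_sandwichSpan (LinearMap.mulLeft R y) (fun a ha b hb e he => by
    simpa only [LinearMap.mulLeft_apply, mul_assoc] using
      mul_mem_sandwichSpan_right (hy a ha e he) hb) hw

theorem sandwichSpan_eq_top (hgen : Algebra.adjoin R (insert y (B : Set A)) = ⊤)
    (hy : ∀ a ∈ B, ∀ e ≤ 2, y * a * y ^ e ∈ sandwichSpan B y) : sandwichSpan B y = ⊤ := by
  refine Submodule.eq_top_iff'.mpr fun u => ?_
  have hu : u ∈ Algebra.adjoin R (insert y (B : Set A)) := hgen ▸ Algebra.mem_top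
  suffices ∀ w ∈ sandwichSpan B y, u * w ∈ sandwichSpan B y by
    simpa using this 1 (mem_sandwichSpan_of_mem B.one_mem)
  induction hu using Algebra.adjoin_induction with
  | mem u hu =>
    rcases hu with rfl | hu
    · exact fun w => mul_mem_sandwichSpan_of_forall hy
    · exact fun w => mul_mem_sandwichSpan_left hu
  | algebraMap r =>
    exact fun w hw => by simpa only [Algebra.smul_def] using Submodule.smul_mem _ r hw
  | add u v _ _ hu hv =>
    exact fun w hw => by simpa only [add_mul] using add_mem (hu w hw) (hv w hw)
  | mul u v _ _ hu hv => exact fun w hw => by simpa only [mul_assoc] using hu _ (hv w hw)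

theorem mul_mul_pow_mem_sandwichSpan_of_commute {α β : R} (hy : y ^ 3 = α • y ^ 2 + β • y + 1)
    (ha : a ∈ B) (hya : Commute y a) (e : ℕ) : y * a * y ^ e ∈ sandwichSpan B y := by
  rw [hya.eq, mul_assoc, ← pow_succ']
  exact mul_mem_sandwichSpan_left ha (pow_mem_sandwichSpan hy _)

theorem mul_mul_pow_mem_sandwichSpan {X : A} (hCB : C ≤ B)
    (hC : C ≤ Subalgebra.centralizer R {y})
    (hwords : ∀ f ≤ 2, ∀ e ≤ 2, y * X ^ f * y ^ e ∈ sandwichSpan B y)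
    (ha : a ∈ sandwichSpan C X) {e : ℕ} (he : e ≤ 2) : y * a * y ^ e ∈ sandwichSpan B y := by
  rw [mul_assoc]
  refine apply_mem_of_mem_sandwichSpan ((LinearMap.mulLeft R y).comp (LinearMap.mulRight R (y ^ e)))
    (fun c hc d hd f hf => ?_) ha
  have hyc : y * c = c * y := (Subalgebra.mem_centralizer_iff R).mp (hC hc) y rfl
  have hyd : y ^ e * d = d * y ^ e :=
    (Commute.pow_left ((Subalgebra.mem_centralizer_iff R).mp (hC hd) y rfl) e).eq
  have hmove : y * (c * X ^ f * d * y ^ e) = c * (y * X ^ f * y ^ e) * d := by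
    calc y * (c * X ^ f * d * y ^ e) = y * c * X ^ f * (d * y ^ e) := by simp only [mul_assoc]
      _ = c * (y * X ^ f * y ^ e) * d := by rw [hyc, ← hyd]; simp only [mul_assoc]
  simp only [LinearMap.comp_apply, LinearMap.mulLeft_apply, LinearMap.mulRight_apply, hmove]
  exact mul_mem_sandwichSpan_right (mul_mem_sandwichSpan_left (hCB hc) (hwords f hf e he)) (hCB hd)

end Sandwich

section TwoGenerators

variable {R} {A : Type*} [Ring A] [Algebra R A] {α β : R} {x y : A}

theorem R0elt_sub_mem_sandwichSpan_adjoin :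
    R0elt R α β x y - y * x ^ 2 * y ∈ sandwichSpan (Algebra.adjoin R {x}) y := by
  have hx : x ∈ Algebra.adjoin R {x} := Algebra.self_mem_adjoin_singleton R x
  have hx2 : x ^ 2 ∈ Algebra.adjoin R {x} := pow_mem hx 2
  have hy : y ∈ sandwichSpan (Algebra.adjoin R {x}) y := by
    simpa using pow_mem_sandwichSpan_of_le (B := Algebra.adjoin R {x}) (y := y) one_le_two
  simp only [R0elt, add_assoc, add_sub_cancel_left, Algebra.algebraMap_eq_smul_one]
  repeat' first
    | exact hy
    | exact pow_mem_sandwichSpan_of_le le_rfl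
    | exact mem_sandwichSpan_of_mem hx
    | exact mem_sandwichSpan_of_mem hx2
    | exact mem_sandwichSpan_of_mem (one_mem _)
    | refine add_mem ?_ ?_
    | refine Submodule.smul_mem _ _ ?_
    | refine mul_mem_sandwichSpan_right ?_ hx
    | refine mul_mem_sandwichSpan_right ?_ hx2
    | refine mul_mem_sandwichSpan_left hx ?_
    | refine mul_mem_sandwichSpan_left hx2 ?_

theorem mul_pow_mul_pow_mem_sandwichSpan_adjoin (hx : x ^ 3 = α • x ^ 2 + β • x + 1)
    (hy : y ^ 3 = α • y ^ 2 + β • y + 1) (hxy : y * x * y = x * y * x)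
    (hR0 : R0elt R α β x y = 0) {f e : ℕ} (hf : f ≤ 2) (he : e ≤ 2) :
    y * x ^ f * y ^ e ∈ sandwichSpan (Algebra.adjoin R {x}) y := by
  have hxB : x ∈ Algebra.adjoin R {x} := Algebra.self_mem_adjoin_singleton R x
  have hword : ∀ {a b : A}, a ∈ Algebra.adjoin R {x} → b ∈ Algebra.adjoin R {x} →
      a * y * b ∈ sandwichSpan (Algebra.adjoin R {x}) y := fun ha hb => by
    simpa using mul_pow_mul_mem_sandwichSpan ha hb one_le_two
  have hyx2 : y * x ^ 2 ∈ sandwichSpan (Algebra.adjoin R {x}) y := by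
    simpa using hword (one_mem _) (pow_mem hxB 2)
  have hyx2y : y * x ^ 2 * y ∈ sandwichSpan (Algebra.adjoin R {x}) y := by
    simpa [hR0] using R0elt_sub_mem_sandwichSpan_adjoin (α := α) (β := β) (x := x) (y := y)
  obtain rfl | rfl | rfl : f = 0 ∨ f = 1 ∨ f = 2 := by omega
  · rw [pow_zero, mul_one, ← pow_succ']
    exact pow_mem_sandwichSpan hy _
  · obtain rfl | rfl | rfl : e = 0 ∨ e = 1 ∨ e = 2 := by omega
    · simpa using hword (one_mem _) hxB
    · rw [pow_one, pow_one, hxy]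
      exact hword hxB hxB
    · rw [pow_one, braid_mul_sq hxy]
      exact hword (pow_mem hxB 2) hxB
  · obtain rfl | rfl | rfl : e = 0 ∨ e = 1 ∨ e = 2 := by omega
    · simpa using hyx2
    · simpa using hyx2y
    · have hx' : x ^ 2 - α • x - β • 1 ∈ Algebra.adjoin R {x} :=
        sub_mem (sub_mem (pow_mem hxB 2) (Subalgebra.smul_mem _ hxB α))
          (Subalgebra.smul_mem _ (one_mem _) β)
      have hconj : y * x ^ 2 * y ^ 2
          = α • (y * x ^ 2 * y) + β • (y * x ^ 2) + (x ^ 2 - α • x - β • 1) * y ^ 2 * x := by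
        rw [← braid_conj_sq hxy (cubic_inv_mul hx) (mul_cubic_inv hx) (mul_cubic_inv hy)
          (cubic_inv_mul hy)]
        simp only [mul_sub, mul_smul_comm, mul_one]
        abel
      rw [hconj]
      exact add_mem (add_mem (Submodule.smul_mem _ α hyx2y) (Submodule.smul_mem _ β hyx2))
        (mul_pow_mul_mem_sandwichSpan hx' hxB le_rfl)

end TwoGenerators

section Tower

variable {R} {α β : R}

theorem braidGen_braid {m : ℕ} {i j : Fin (m - 1)} (hij : (j : ℕ) = i + 1) :
    braidGen m i * braidGen m j * braidGen m i = braidGen m j * braidGen m i * braidGen m j := by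
  have h := braid_mk_eq_one (Or.inr ⟨i, j, hij, rfl⟩)
  rw [map_mul, map_inv] at h
  exact mul_inv_eq_one.mp h

theorem braidGen_commute {m : ℕ} {i j : Fin (m - 1)} (hij : (i : ℕ) + 1 < j) :
    Commute (braidGen m i) (braidGen m j) := by
  have h := braid_mk_eq_one (Or.inl ⟨i, j, hij, rfl⟩)
  simp only [map_mul, map_inv] at h
  exact mul_inv_eq_iff_eq_mul.mp (mul_inv_eq_one.mp h)

variable (α β) in
noncomputable def kbHom (m : ℕ) : BraidGroup m →* KAlg R α β m :=
  ((RingQuot.mkAlgHom R (KRel R α β m)).comp (RingQuot.mkAlgHom R (cubicRel R α β m)) :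
    MonoidAlgebra R (BraidGroup m) →* KAlg R α β m).comp (MonoidAlgebra.of R (BraidGroup m))

theorem kbHom_braidGen (m : ℕ) (i : Fin (m - 1)) : kbHom α β m (braidGen m i) = kb R α β m i :=
  rfl

theorem kb_cubic (m : ℕ) (i : Fin (m - 1)) :
    kb R α β m i ^ 3 = α • kb R α β m i ^ 2 + β • kb R α β m i + 1 := by
  simpa only [kb, hb, map_pow, map_add, map_smul, map_one] using
    congrArg (RingQuot.mkAlgHom R (KRel R α β m))
      (RingQuot.mkAlgHom_rel R (cubicRel.cube (α := α) (β := β) i))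

theorem kb_braid {m : ℕ} {i j : Fin (m - 1)} (hij : (j : ℕ) = i + 1) :
    kb R α β m i * kb R α β m j * kb R α β m i = kb R α β m j * kb R α β m i * kb R α β m j := by
  simpa only [map_mul, kbHom_braidGen] using congrArg (kbHom α β m) (braidGen_braid hij)

theorem kb_commute {m : ℕ} {i j : Fin (m - 1)} (hij : (i : ℕ) + 1 < j) :
    Commute (kb R α β m i) (kb R α β m j) := by
  simpa only [kbHom_braidGen] using (braidGen_commute hij).map (kbHom α β m)

theorem R0elt_kb (m : ℕ) (j : Fin (m - 1)) (h : (j : ℕ) + 1 < m - 1) :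
    R0elt R α β (kb R α β m j) (kb R α β m ⟨j + 1, h⟩) = 0 := by
  have h := RingQuot.mkAlgHom_rel R (KRel.r0 (α := α) (β := β) j h)
  rwa [map_R0elt R (A := CubicHecke R α β m) (B := KAlg R α β m) (RingQuot.mkAlgHom R _),
    map_zero] at h

theorem kbHom_mem_adjoin_range_kb (m : ℕ) (g : BraidGroup m) :
    kbHom α β m g ∈ Algebra.adjoin R (Set.range (kb R α β m)) := by
  have hgen : Set.range (PresentedGroup.of (rels := braidRels (m - 1))) ∪
      (Set.range PresentedGroup.of)⁻¹ ⊆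
        (Algebra.adjoin R (Set.range (kb R α β m))).toSubmonoid.comap (kbHom α β m) := by
    rintro h (⟨i, rfl⟩ | ⟨i, hi⟩)
    · exact Algebra.subset_adjoin ⟨i, rfl⟩
    · obtain rfl : h = (braidGen m i)⁻¹ := by rw [braidGen, hi, inv_inv]
      have hkb : kb R α β m i ∈ Algebra.adjoin R (Set.range (kb R α β m)) :=
        Algebra.subset_adjoin ⟨i, rfl⟩
      have hinv : kbHom α β m (braidGen m i)⁻¹ = kb R α β m i ^ 2 - α • kb R α β m i - β • 1 :=
        left_inv_eq_right_inv (a := kb R α β m i)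
          (by rw [← kbHom_braidGen, ← map_mul, inv_mul_cancel, map_one])
          (mul_cubic_inv (A := KAlg R α β m) (kb_cubic m i))
      show kbHom α β m (braidGen m i)⁻¹ ∈ Algebra.adjoin R (Set.range (kb R α β m))
      rw [hinv]
      exact Subalgebra.sub_mem (A := KAlg R α β m) _
        (Subalgebra.sub_mem (A := KAlg R α β m) _ (pow_mem hkb 2) (Subalgebra.smul_mem _ hkb α))
        (Subalgebra.smul_mem _ (one_mem _) β)
  have htop := Submonoid.closure_le.mpr hgen
  rw [← Subgroup.closure_toSubmonoid, PresentedGroup.closure_range_of] at htop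
  exact htop (Subgroup.mem_top g)

theorem adjoin_range_kb (m : ℕ) : Algebra.adjoin R (Set.range (kb R α β m)) = ⊤ := by
  rw [eq_top_iff]
  rintro w -
  obtain ⟨p, rfl⟩ := RingQuot.mkAlgHom_surjective R (KRel R α β m) w
  obtain ⟨q, rfl⟩ := RingQuot.mkAlgHom_surjective R (cubicRel R α β m) p
  induction q using MonoidAlgebra.induction_on with
  | of g => exact kbHom_mem_adjoin_range_kb m g
  | add f g hf hg => simpa only [map_add] using add_mem hf hg
  | smul r f hf => simpa only [map_smul] using Subalgebra.smul_mem _ hf r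

theorem towerIncl_kb (m : ℕ) (i : Fin (m - 1)) :
    towerIncl R α β m (kb R α β m i) = kb R α β (m + 1) (Fin.castLE (by omega) i) := by
  rw [kb, towerIncl, RingQuot.liftAlgHom_mkAlgHom_apply, AlgHom.comp_apply, heckeIncl_gen]
  rfl

end Tower

section LastGenerator

variable {R} {α β : R}

theorem lastGen_cubic (n : ℕ) (hn : 1 ≤ n) :
    lastGen R α β n hn ^ 3 = α • lastGen R α β n hn ^ 2 + β • lastGen R α β n hn + 1 :=
  kb_cubic _ _

theorem towerIncl_lastGen (n : ℕ) (hn : 1 ≤ n) :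
    towerIncl R α β (n + 1) (lastGen R α β n hn) = kb R α β (n + 2) ⟨n - 1, by omega⟩ :=
  towerIncl_kb _ _

theorem lastGen_succ (n : ℕ) (hn : 1 ≤ n + 1) :
    lastGen R α β (n + 1) hn = kb R α β (n + 2) ⟨n, by omega⟩ :=
  rfl

theorem towerIncl_lastGen_cubic (n : ℕ) (hn : 1 ≤ n) :
    towerIncl R α β (n + 1) (lastGen R α β n hn) ^ 3
      = α • towerIncl R α β (n + 1) (lastGen R α β n hn) ^ 2
        + β • towerIncl R α β (n + 1) (lastGen R α β n hn) + 1 := by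
  rw [towerIncl_lastGen]
  exact kb_cubic _ _

theorem lastGen_braid (n : ℕ) (hn : 1 ≤ n) :
    lastGen R α β (n + 1) (by omega) * towerIncl R α β (n + 1) (lastGen R α β n hn)
        * lastGen R α β (n + 1) (by omega)
      = towerIncl R α β (n + 1) (lastGen R α β n hn) * lastGen R α β (n + 1) (by omega)
        * towerIncl R α β (n + 1) (lastGen R α β n hn) := by
  rw [towerIncl_lastGen, lastGen_succ]
  exact (kb_braid (by simp; omega)).symm

theorem R0elt_towerIncl_lastGen (n : ℕ) (hn : 1 ≤ n) :
    R0elt R α β (towerIncl R α β (n + 1) (lastGen R α β n hn)) (lastGen R α β (n + 1) (by omega))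
      = 0 := by
  rw [towerIncl_lastGen, lastGen_succ]
  convert R0elt_kb (n + 2) ⟨n - 1, by omega⟩ (by simp; omega) using 3
  exact Fin.ext (by simp; omega)

theorem lastGen_mul_towerIncl_lastGen_pow_mul_pow_mem (n : ℕ) (hn : 1 ≤ n) {f e : ℕ}
    (hf : f ≤ 2) (he : e ≤ 2) :
    lastGen R α β (n + 1) (by omega) * towerIncl R α β (n + 1) (lastGen R α β n hn) ^ f
        * lastGen R α β (n + 1) (by omega) ^ e
      ∈ sandwichSpan (towerIncl R α β (n + 1)).range (lastGen R α β (n + 1) (by omega)) :=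
  sandwichSpan_mono (Algebra.adjoin_singleton_le (AlgHom.mem_range_self _ _))
    (mul_pow_mul_pow_mem_sandwichSpan_adjoin (towerIncl_lastGen_cubic n hn) (lastGen_cubic _ _)
      (lastGen_braid n hn) (R0elt_towerIncl_lastGen n hn) hf he)

theorem range_towerIncl_comp_le_centralizer_lastGen (n : ℕ) :
    ((towerIncl R α β (n + 1)).comp (towerIncl R α β n)).range
      ≤ Subalgebra.centralizer R {lastGen R α β (n + 1) (by omega)} := by
  rw [← Algebra.map_top, ← adjoin_range_kb n, AlgHom.map_adjoin, Algebra.adjoin_le_iff]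
  rintro _ ⟨_, ⟨i, rfl⟩, rfl⟩
  rw [SetLike.mem_coe, Subalgebra.mem_centralizer_iff]
  rintro _ rfl
  simp only [AlgHom.comp_apply, towerIncl_kb]
  exact (kb_commute (by simp; omega)).eq.symm

theorem range_towerIncl_one : (towerIncl R α β 1).range = ⊥ := by
  have : IsEmpty (Fin (1 - 1)) := Fin.isEmpty'
  rw [← Algebra.map_top, ← adjoin_range_kb 1, Set.range_eq_empty, Algebra.adjoin_empty,
    Algebra.map_bot]

theorem adjoin_insert_lastGen_range_towerIncl (n : ℕ) (hn : 1 ≤ n) :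
    Algebra.adjoin R (insert (lastGen R α β n hn) ((towerIncl R α β n).range : Set _)) = ⊤ := by
  rw [← top_le_iff, ← adjoin_range_kb (n + 1), Algebra.adjoin_le_iff]
  rintro _ ⟨i, rfl⟩
  by_cases hi : (i : ℕ) < n - 1
  · exact Algebra.subset_adjoin (Set.mem_insert_of_mem _ ⟨kb R α β n ⟨i, hi⟩, towerIncl_kb _ _⟩)
  · refine Algebra.subset_adjoin (Set.mem_insert_iff.mpr (.inl ?_))
    exact congrArg _ (Fin.ext (by simp; omega))

end LastGenerator

variable {R} in
theorem sandwichSpan_range_towerIncl_eq_top {α β : R} {n : ℕ} (hn : 1 ≤ n) :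
    sandwichSpan (towerIncl R α β n).range (lastGen R α β n hn) = ⊤ := by
  induction n, hn using Nat.le_induction with
  | base =>
    refine sandwichSpan_eq_top (adjoin_insert_lastGen_range_towerIncl 1 le_rfl) fun a ha e _ => ?_
    obtain ⟨c, rfl⟩ := Algebra.mem_bot.mp (range_towerIncl_one (α := α) (β := β) ▸ ha)
    exact mul_mul_pow_mem_sandwichSpan_of_commute (lastGen_cubic 1 le_rfl) ha
      (Algebra.commutes c _).symm e
  | succ n hn ih =>
    refine sandwichSpan_eq_top (adjoin_insert_lastGen_range_towerIncl _ _) ?_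
    rintro _ ⟨a, rfl⟩ e he
    have ha : a ∈ sandwichSpan (towerIncl R α β n).range (lastGen R α β n hn) := by
      rw [ih]
      exact Submodule.mem_top
    replace ha := map_mem_sandwichSpan (A' := KAlg R α β (n + 1 + 1)) (towerIncl R α β (n + 1)) ha
    rw [← AlgHom.range_comp] at ha
    have hCB := AlgHom.range_comp_le_range (towerIncl R α β n) (towerIncl R α β (n + 1))
    have hC := range_towerIncl_comp_le_centralizer_lastGen (α := α) (β := β) n
    refine mul_mul_pow_mem_sandwichSpan hCB hC (fun f hf e he => ?_) ha he
    exact lastGen_mul_towerIncl_lastGen_pow_mul_pow_mem n hn hf he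

/-- Every element of `K_{n+1}(α,β)` is a finite `ℂ`-linear combination of elements
`ι(a)·b_nᵉ·ι(b)` with `a, b ∈ K_n(α,β)` and `ε ∈ {0,1,2}`. -/
theorem statement_7 (α β : ℂ) (n : ℕ) (hn : 1 ≤ n) (w : KAlg ℂ α β (n + 1)) :
    w ∈ Submodule.span ℂ
      { w' : KAlg ℂ α β (n + 1) | ∃ (a b : KAlg ℂ α β n) (e : ℕ), e ≤ 2 ∧
          w' = towerIncl ℂ α β n a * lastGen ℂ α β n hn ^ e * towerIncl ℂ α β n b } := by
  have hw : w ∈ sandwichSpan (towerIncl ℂ α β n).range (lastGen ℂ α β n hn) := by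
    rw [sandwichSpan_range_towerIncl_eq_top hn]
    exact Submodule.mem_top
  refine Submodule.span_mono ?_ hw
  rintro _ ⟨_, ⟨a, rfl⟩, _, ⟨b, rfl⟩, e, he, rfl⟩
  exact ⟨a, b, e, he, rfl⟩
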